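/- Let μ be a probability measure on ℝ × ℝ with marginal distributions μ₁ (of the first coordinate) and μ₂ (of the second coordinate), and assume that the functions (x,y) ↦ x², (x,y) ↦ y² and (x,y) ↦ x²y² are integrable with respect to μ. Then the expectation of the product of Bergsma kernels equals the four-moments expression: ∫∫ h_{μ₁}(x₁,x₂) · h_{μ₂}(y₁,y₂) d(μ ⊗ μ)((x₁,y₁),(x₂,y₂)) = (1/4)·[ μ₁₂ − 2·μ₃ + m₁·m₂ ], where μ₁₂ = ∫∫ |x₁−x₂|·|y₁−y₂| d(μ⊗μ), μ₃ = ∫ g_{μ₁}(x)·g_{μ₂}(y) dμ(x,y), m₁ = ∫∫ |x₁−x₂| d(μ₁⊗μ₁) and m₂ = ∫∫ |y₁−y₂| d(μ₂⊗μ₂). -/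

import Mathlib

open MeasureTheory

/-- `g_ν(z) = ∫ |z - w| dν(w)`. -/
noncomputable def gfun (ν : Measure ℝ) (z : ℝ) : ℝ := ∫ w, |z - w| ∂ν

/-- `m(ν) = ∫∫ |w₁ - w₂| d(ν ⊗ ν)`. -/
noncomputable def mfun (ν : Measure ℝ) : ℝ := ∫ p : ℝ × ℝ, |p.1 - p.2| ∂(ν.prod ν)

/-- Bergsma's kernel `h_ν(z₁, z₂) = -(1/2)(|z₁ - z₂| - g_ν(z₁) - g_ν(z₂) + m(ν))`. -/
noncomputable def bergsmaKernel (ν : Measure ℝ) (z₁ z₂ : ℝ) : ℝ :=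
  -(1 / 2) * (|z₁ - z₂| - gfun ν z₁ - gfun ν z₂ + mfun ν)

lemma integrable_abs_sub' {ν : Measure ℝ} [IsProbabilityMeasure ν]
    (hν : Integrable (fun w => |w|) ν) (z : ℝ) :
    Integrable (fun w => |z - w|) ν := by
  refine ((integrable_const |z|).add hν).mono'
    ((measurable_const.sub measurable_id).abs.aestronglyMeasurable) ?_
  filter_upwards with w
  simpa [Real.norm_eq_abs, abs_abs] using abs_sub z w

lemma gfun_nonneg' (ν : Measure ℝ) (z : ℝ) : 0 ≤ gfun ν z :=
  integral_nonneg fun _ => abs_nonneg _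

lemma abs_gfun_le' {ν : Measure ℝ} [IsProbabilityMeasure ν]
    (hν : Integrable (fun w => |w|) ν) (z : ℝ) :
    |gfun ν z| ≤ |z| + ∫ w, |w| ∂ν := by
  rw [abs_of_nonneg (gfun_nonneg' ν z)]
  have h : gfun ν z ≤ ∫ w, (|z| + |w|) ∂ν :=
    integral_mono (integrable_abs_sub' hν z) ((integrable_const |z|).add hν)
      fun w => abs_sub z w
  simpa [integral_add (integrable_const |z|) hν] using h

lemma gfun_lipschitz' (ν : Measure ℝ) [IsProbabilityMeasure ν]
    (hν : Integrable (fun w => |w|) ν) : LipschitzWith 1 (gfun ν) := by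
  refine LipschitzWith.of_dist_le_mul fun a b => ?_
  rw [Real.dist_eq, Real.dist_eq, NNReal.coe_one, one_mul]
  have h1 : gfun ν a - gfun ν b = ∫ w, (|a - w| - |b - w|) ∂ν := by
    rw [integral_sub (integrable_abs_sub' hν a) (integrable_abs_sub' hν b)]; rfl
  rw [h1]
  calc |∫ w, (|a - w| - |b - w|) ∂ν| ≤ ∫ w, |(|a - w| - |b - w|)| ∂ν := by
        simpa [Real.norm_eq_abs] using
          norm_integral_le_integral_norm (fun w => |a - w| - |b - w|)
    _ ≤ ∫ (_ : ℝ), |a - b| ∂ν := by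
        refine integral_mono ((integrable_abs_sub' hν a).sub (integrable_abs_sub' hν b)).abs
          (integrable_const _) fun w => ?_
        simpa using abs_abs_sub_abs_le_abs_sub (a - w) (b - w)
    _ = |a - b| := by simp

lemma gfun_measurable' (ν : Measure ℝ) [IsProbabilityMeasure ν]
    (hν : Integrable (fun w => |w|) ν) : Measurable (gfun ν) :=
  (gfun_lipschitz' ν hν).continuous.measurable

theorem stmt0 (μ : Measure (ℝ × ℝ)) [IsProbabilityMeasure μ]
    (hx : Integrable (fun p : ℝ × ℝ => p.1 ^ 2) μ)
    (hy : Integrable (fun p : ℝ × ℝ => p.2 ^ 2) μ)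
    (hxy : Integrable (fun p : ℝ × ℝ => p.1 ^ 2 * p.2 ^ 2) μ) :
    (∫ q : (ℝ × ℝ) × (ℝ × ℝ),
        bergsmaKernel (μ.map Prod.fst) q.1.1 q.2.1 *
          bergsmaKernel (μ.map Prod.snd) q.1.2 q.2.2 ∂(μ.prod μ)) =
      (1 / 4) *
        ((∫ q : (ℝ × ℝ) × (ℝ × ℝ), |q.1.1 - q.2.1| * |q.1.2 - q.2.2| ∂(μ.prod μ)) -
            2 * (∫ p : ℝ × ℝ, gfun (μ.map Prod.fst) p.1 * gfun (μ.map Prod.snd) p.2 ∂μ) +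
          mfun (μ.map Prod.fst) * mfun (μ.map Prod.snd)) := by
  clear hxy
  set μ₁ : Measure ℝ := μ.map Prod.fst with hμ₁def
  set μ₂ : Measure ℝ := μ.map Prod.snd with hμ₂def
  haveI : IsProbabilityMeasure μ₁ := Measure.isProbabilityMeasure_map measurable_fst.aemeasurable
  haveI : IsProbabilityMeasure μ₂ := Measure.isProbabilityMeasure_map measurable_snd.aemeasurable
  -- basic integrability of |x|, |y|, |x||y|
  have iax : Integrable (fun p : ℝ × ℝ => |p.1|) μ := by
    refine (hx.add (integrable_const 1)).mono'
      (measurable_fst.abs.aestronglyMeasurable) ?_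
    filter_upwards with p
    simp only [Pi.add_apply, Real.norm_eq_abs, abs_abs]
    nlinarith [sq_abs p.1, abs_nonneg p.1, sq_nonneg (|p.1| - 1)]
  have iay : Integrable (fun p : ℝ × ℝ => |p.2|) μ := by
    refine (hy.add (integrable_const 1)).mono'
      (measurable_snd.abs.aestronglyMeasurable) ?_
    filter_upwards with p
    simp only [Pi.add_apply, Real.norm_eq_abs, abs_abs]
    nlinarith [sq_abs p.2, abs_nonneg p.2, sq_nonneg (|p.2| - 1)]
  have iaxy : Integrable (fun p : ℝ × ℝ => |p.1| * |p.2|) μ := by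
    refine (hx.add hy).mono'
      ((measurable_fst.abs.mul measurable_snd.abs).aestronglyMeasurable) ?_
    filter_upwards with p
    simp only [Pi.add_apply, Real.norm_eq_abs]
    rw [abs_of_nonneg (mul_nonneg (abs_nonneg _) (abs_nonneg _))]
    nlinarith [sq_abs p.1, sq_abs p.2, sq_nonneg (|p.1| - |p.2|), abs_nonneg p.1, abs_nonneg p.2]
  have im1 : Integrable (fun w => |w|) μ₁ := by
    rw [hμ₁def, integrable_map_measure measurable_abs.aestronglyMeasurable
      measurable_fst.aemeasurable]
    exact iax
  have im2 : Integrable (fun w => |w|) μ₂ := by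
    rw [hμ₂def, integrable_map_measure measurable_abs.aestronglyMeasurable
      measurable_snd.aemeasurable]
    exact iay
  set C1 : ℝ := ∫ w, |w| ∂μ₁ with hC1def
  set C2 : ℝ := ∫ w, |w| ∂μ₂ with hC2def
  have C1nn : 0 ≤ C1 := integral_nonneg fun _ => abs_nonneg _
  have C2nn : 0 ≤ C2 := integral_nonneg fun _ => abs_nonneg _
  have mg1 : Measurable (gfun μ₁) := gfun_measurable' μ₁ im1
  have mg2 : Measurable (gfun μ₂) := gfun_measurable' μ₂ im2
  have gb1 : ∀ z : ℝ, |gfun μ₁ z| ≤ |z| + C1 := fun z => abs_gfun_le' im1 z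
  have gb2 : ∀ z : ℝ, |gfun μ₂ z| ≤ |z| + C2 := fun z => abs_gfun_le' im2 z
  -- map identities
  have hmapfst : (μ.prod μ).map (Prod.fst : (ℝ×ℝ)×(ℝ×ℝ) → ℝ×ℝ) = μ := by simp
  have hmapsnd : (μ.prod μ).map (Prod.snd : (ℝ×ℝ)×(ℝ×ℝ) → ℝ×ℝ) = μ := by simp
  have gmap1 : ∀ a : ℝ, gfun μ₁ a = ∫ p : ℝ × ℝ, |a - p.1| ∂μ := fun a => by
    rw [gfun, hμ₁def]
    exact integral_map measurable_fst.aemeasurable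
      ((measurable_const.sub measurable_id).abs.aestronglyMeasurable)
  have gmap2 : ∀ a : ℝ, gfun μ₂ a = ∫ p : ℝ × ℝ, |a - p.2| ∂μ := fun a => by
    rw [gfun, hμ₂def]
    exact integral_map measurable_snd.aemeasurable
      ((measurable_const.sub measurable_id).abs.aestronglyMeasurable)
  have hm1 : mfun μ₁ = ∫ q : (ℝ×ℝ)×(ℝ×ℝ), |q.1.1 - q.2.1| ∂(μ.prod μ) := by
    rw [mfun, hμ₁def, Measure.map_prod_map μ μ measurable_fst measurable_fst,
      integral_map (measurable_fst.prodMap measurable_fst).aemeasurable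
        (show AEStronglyMeasurable (fun p : ℝ × ℝ => |p.1 - p.2|) _ from
          (measurable_fst.sub measurable_snd).abs.aestronglyMeasurable)]
    rfl
  have hm2 : mfun μ₂ = ∫ q : (ℝ×ℝ)×(ℝ×ℝ), |q.1.2 - q.2.2| ∂(μ.prod μ) := by
    rw [mfun, hμ₂def, Measure.map_prod_map μ μ measurable_snd measurable_snd,
      integral_map (measurable_snd.prodMap measurable_snd).aemeasurable
        (show AEStronglyMeasurable (fun p : ℝ × ℝ => |p.1 - p.2|) _ from
          (measurable_fst.sub measurable_snd).abs.aestronglyMeasurable)]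
    rfl
  -- composition helpers
  have icfst : ∀ F : ℝ × ℝ → ℝ, Integrable F μ →
      Integrable (fun q : (ℝ×ℝ)×(ℝ×ℝ) => F q.1) (μ.prod μ) := by
    intro F hF
    have h1 : AEStronglyMeasurable F ((μ.prod μ).map Prod.fst) := by
      rw [hmapfst]; exact hF.1
    have h2 : Integrable F ((μ.prod μ).map Prod.fst) := by rw [hmapfst]; exact hF
    exact (integrable_map_measure h1 measurable_fst.aemeasurable).mp h2
  have icsnd : ∀ F : ℝ × ℝ → ℝ, Integrable F μ →
      Integrable (fun q : (ℝ×ℝ)×(ℝ×ℝ) => F q.2) (μ.prod μ) := by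
    intro F hF
    have h1 : AEStronglyMeasurable F ((μ.prod μ).map Prod.snd) := by
      rw [hmapsnd]; exact hF.1
    have h2 : Integrable F ((μ.prod μ).map Prod.snd) := by rw [hmapsnd]; exact hF
    exact (integrable_map_measure h1 measurable_snd.aemeasurable).mp h2
  have vfst : ∀ F : ℝ × ℝ → ℝ, AEStronglyMeasurable F μ →
      (∫ q : (ℝ×ℝ)×(ℝ×ℝ), F q.1 ∂(μ.prod μ)) = ∫ p, F p ∂μ := by
    intro F hF
    have h1 : AEStronglyMeasurable F ((μ.prod μ).map Prod.fst) := by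
      rw [hmapfst]; exact hF
    have h := integral_map (μ := μ.prod μ) measurable_fst.aemeasurable h1
    rw [hmapfst] at h
    exact h.symm
  have vsnd : ∀ F : ℝ × ℝ → ℝ, AEStronglyMeasurable F μ →
      (∫ q : (ℝ×ℝ)×(ℝ×ℝ), F q.2 ∂(μ.prod μ)) = ∫ p, F p ∂μ := by
    intro F hF
    have h1 : AEStronglyMeasurable F ((μ.prod μ).map Prod.snd) := by
      rw [hmapsnd]; exact hF
    have h := integral_map (μ := μ.prod μ) measurable_snd.aemeasurable h1
    rw [hmapsnd] at h
    exact h.symm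
  -- the master dominating function
  have P1 : Integrable (fun p : ℝ × ℝ =>
      |p.1| * |p.2| + 2 * C2 * |p.1| + 2 * C1 * |p.2| + 2 * C1 * (2 * C2)) μ :=
    ((iaxy.add (iax.const_mul (2 * C2))).add (iay.const_mul (2 * C1))).add
      (integrable_const _)
  have P2 : Integrable (fun p : ℝ × ℝ =>
      |p.1| * |p.2| + 2 * C2 * |p.1| + 2 * C1 * |p.2|) μ :=
    (iaxy.add (iax.const_mul (2 * C2))).add (iay.const_mul (2 * C1))
  have ibb : Integrable (fun q : (ℝ×ℝ)×(ℝ×ℝ) =>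
      (|q.1.1| + |q.2.1| + 2 * C1) * (|q.1.2| + |q.2.2| + 2 * C2)) (μ.prod μ) := by
    have e1 := icfst _ P1
    have e2 := icsnd _ P2
    have e3 : Integrable (fun q : (ℝ×ℝ)×(ℝ×ℝ) => |q.1.1| * |q.2.2|) (μ.prod μ) :=
      iax.mul_prod iay
    have e4 : Integrable (fun q : (ℝ×ℝ)×(ℝ×ℝ) => |q.1.2| * |q.2.1|) (μ.prod μ) :=
      iay.mul_prod iax
    have heq : (fun q : (ℝ×ℝ)×(ℝ×ℝ) =>
        (|q.1.1| + |q.2.1| + 2 * C1) * (|q.1.2| + |q.2.2| + 2 * C2)) =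
        fun q => (|q.1.1| * |q.1.2| + 2 * C2 * |q.1.1| + 2 * C1 * |q.1.2| + 2 * C1 * (2 * C2) +
          (|q.2.1| * |q.2.2| + 2 * C2 * |q.2.1| + 2 * C1 * |q.2.2|)) +
          (|q.1.1| * |q.2.2| + |q.1.2| * |q.2.1|) := by
      funext q; ring
    rw [heq]
    exact (e1.add e2).add (e3.add e4)
  have key : ∀ f g : (ℝ×ℝ)×(ℝ×ℝ) → ℝ, Measurable f → Measurable g →
      (∀ q, |f q| ≤ |q.1.1| + |q.2.1| + 2 * C1) →
      (∀ q, |g q| ≤ |q.1.2| + |q.2.2| + 2 * C2) →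
      Integrable (fun q => f q * g q) (μ.prod μ) := by
    intro f g hf hg h1 h2
    refine ibb.mono' (hf.mul hg).aestronglyMeasurable ?_
    filter_upwards with q
    rw [Real.norm_eq_abs, abs_mul]
    exact mul_le_mul (h1 q) (h2 q) (abs_nonneg _) ((abs_nonneg _).trans (h1 q))
  -- bounds for the factors
  have bA1 : ∀ q : (ℝ×ℝ)×(ℝ×ℝ), |(|q.1.1 - q.2.1|)| ≤ |q.1.1| + |q.2.1| + 2 * C1 := by
    intro q; rw [abs_abs]
    have := abs_sub q.1.1 q.2.1; linarith
  have bA2 : ∀ q : (ℝ×ℝ)×(ℝ×ℝ), |(|q.1.2 - q.2.2|)| ≤ |q.1.2| + |q.2.2| + 2 * C2 := by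
    intro q; rw [abs_abs]
    have := abs_sub q.1.2 q.2.2; linarith
  have bG1a : ∀ q : (ℝ×ℝ)×(ℝ×ℝ), |gfun μ₁ q.1.1| ≤ |q.1.1| + |q.2.1| + 2 * C1 := by
    intro q; have := gb1 q.1.1; have := abs_nonneg q.2.1; linarith
  have bG1b : ∀ q : (ℝ×ℝ)×(ℝ×ℝ), |gfun μ₁ q.2.1| ≤ |q.1.1| + |q.2.1| + 2 * C1 := by
    intro q; have := gb1 q.2.1; have := abs_nonneg q.1.1; linarith
  have bG2a : ∀ q : (ℝ×ℝ)×(ℝ×ℝ), |gfun μ₂ q.1.2| ≤ |q.1.2| + |q.2.2| + 2 * C2 := by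
    intro q; have := gb2 q.1.2; have := abs_nonneg q.2.2; linarith
  have bG2b : ∀ q : (ℝ×ℝ)×(ℝ×ℝ), |gfun μ₂ q.2.2| ≤ |q.1.2| + |q.2.2| + 2 * C2 := by
    intro q; have := gb2 q.2.2; have := abs_nonneg q.1.2; linarith
  -- measurability of the factors
  have mA1 : Measurable (fun q : (ℝ×ℝ)×(ℝ×ℝ) => |q.1.1 - q.2.1|) :=
    (measurable_fst.fst.sub measurable_snd.fst).abs
  have mA2 : Measurable (fun q : (ℝ×ℝ)×(ℝ×ℝ) => |q.1.2 - q.2.2|) :=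
    (measurable_fst.snd.sub measurable_snd.snd).abs
  have mG1a : Measurable (fun q : (ℝ×ℝ)×(ℝ×ℝ) => gfun μ₁ q.1.1) := mg1.comp measurable_fst.fst
  have mG1b : Measurable (fun q : (ℝ×ℝ)×(ℝ×ℝ) => gfun μ₁ q.2.1) := mg1.comp measurable_snd.fst
  have mG2a : Measurable (fun q : (ℝ×ℝ)×(ℝ×ℝ) => gfun μ₂ q.1.2) := mg2.comp measurable_fst.snd
  have mG2b : Measurable (fun q : (ℝ×ℝ)×(ℝ×ℝ) => gfun μ₂ q.2.2) := mg2.comp measurable_snd.snd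
  -- integrability of single factors on μ
  have ig1 : Integrable (fun p : ℝ × ℝ => gfun μ₁ p.1) μ := by
    refine (iax.add (integrable_const C1)).mono'
      ((mg1.comp measurable_fst).aestronglyMeasurable) ?_
    filter_upwards with p
    simpa [Real.norm_eq_abs] using gb1 p.1
  have ig2 : Integrable (fun p : ℝ × ℝ => gfun μ₂ p.2) μ := by
    refine (iay.add (integrable_const C2)).mono'
      ((mg2.comp measurable_snd).aestronglyMeasurable) ?_
    filter_upwards with p
    simpa [Real.norm_eq_abs] using gb2 p.2
  -- integrability of single factors on μ.prod μ
  have iA1 : Integrable (fun q : (ℝ×ℝ)×(ℝ×ℝ) => |q.1.1 - q.2.1|) (μ.prod μ) := by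
    refine ((icfst _ iax).add (icsnd _ iax)).mono' mA1.aestronglyMeasurable ?_
    filter_upwards with q
    simpa [Real.norm_eq_abs, abs_abs] using abs_sub q.1.1 q.2.1
  have iA2 : Integrable (fun q : (ℝ×ℝ)×(ℝ×ℝ) => |q.1.2 - q.2.2|) (μ.prod μ) := by
    refine ((icfst _ iay).add (icsnd _ iay)).mono' mA2.aestronglyMeasurable ?_
    filter_upwards with q
    simpa [Real.norm_eq_abs, abs_abs] using abs_sub q.1.2 q.2.2
  have iG1a : Integrable (fun q : (ℝ×ℝ)×(ℝ×ℝ) => gfun μ₁ q.1.1) (μ.prod μ) := icfst _ ig1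
  have iG1b : Integrable (fun q : (ℝ×ℝ)×(ℝ×ℝ) => gfun μ₁ q.2.1) (μ.prod μ) := icsnd _ ig1
  have iG2a : Integrable (fun q : (ℝ×ℝ)×(ℝ×ℝ) => gfun μ₂ q.1.2) (μ.prod μ) := icfst _ ig2
  have iG2b : Integrable (fun q : (ℝ×ℝ)×(ℝ×ℝ) => gfun μ₂ q.2.2) (μ.prod μ) := icsnd _ ig2
  -- the sixteen terms: integrability
  have iT1 := key _ _ mA1 mA2 bA1 bA2
  have iT2 := key _ _ mA1 mG2a bA1 bG2a
  have iT3 := key _ _ mA1 mG2b bA1 bG2b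
  have iT4 := iA1.mul_const (mfun μ₂)
  have iT5 := key _ _ mG1a mA2 bG1a bA2
  have iT6 := key _ _ mG1a mG2a bG1a bG2a
  have iT7 := key _ _ mG1a mG2b bG1a bG2b
  have iT8 := iG1a.mul_const (mfun μ₂)
  have iT9 := key _ _ mG1b mA2 bG1b bA2
  have iT10 := key _ _ mG1b mG2a bG1b bG2a
  have iT11 := key _ _ mG1b mG2b bG1b bG2b
  have iT12 := iG1b.mul_const (mfun μ₂)
  have iT13 := iA2.const_mul (mfun μ₁)
  have iT14 := iG2a.const_mul (mfun μ₁)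
  have iT15 := iG2b.const_mul (mfun μ₁)
  have iT16 : Integrable (fun _ : (ℝ×ℝ)×(ℝ×ℝ) => mfun μ₁ * mfun μ₂) (μ.prod μ) :=
    integrable_const _
  -- values of single-factor integrals
  have hm1val : mfun μ₁ = ∫ p : ℝ × ℝ, gfun μ₁ p.1 ∂μ := by
    rw [hm1, integral_prod _ iA1]
    refine integral_congr_ae (Filter.Eventually.of_forall fun p => ?_)
    exact (gmap1 p.1).symm
  have hm2val : mfun μ₂ = ∫ p : ℝ × ℝ, gfun μ₂ p.2 ∂μ := by
    rw [hm2, integral_prod _ iA2]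
    refine integral_congr_ae (Filter.Eventually.of_forall fun p => ?_)
    exact (gmap2 p.2).symm
  have vG1a : (∫ q : (ℝ×ℝ)×(ℝ×ℝ), gfun μ₁ q.1.1 ∂(μ.prod μ)) = mfun μ₁ :=
    (vfst (fun p => gfun μ₁ p.1)
      (mg1.comp measurable_fst).aestronglyMeasurable).trans hm1val.symm
  have vG1b : (∫ q : (ℝ×ℝ)×(ℝ×ℝ), gfun μ₁ q.2.1 ∂(μ.prod μ)) = mfun μ₁ :=
    (vsnd (fun p => gfun μ₁ p.1)
      (mg1.comp measurable_fst).aestronglyMeasurable).trans hm1val.symm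
  have vG2a : (∫ q : (ℝ×ℝ)×(ℝ×ℝ), gfun μ₂ q.1.2 ∂(μ.prod μ)) = mfun μ₂ :=
    (vfst (fun p => gfun μ₂ p.2)
      (mg2.comp measurable_snd).aestronglyMeasurable).trans hm2val.symm
  have vG2b : (∫ q : (ℝ×ℝ)×(ℝ×ℝ), gfun μ₂ q.2.2 ∂(μ.prod μ)) = mfun μ₂ :=
    (vsnd (fun p => gfun μ₂ p.2)
      (mg2.comp measurable_snd).aestronglyMeasurable).trans hm2val.symm
  -- values of the sixteen terms
  have vT2 : (∫ q : (ℝ×ℝ)×(ℝ×ℝ), |q.1.1 - q.2.1| * gfun μ₂ q.1.2 ∂(μ.prod μ)) =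
      ∫ p : ℝ × ℝ, gfun μ₁ p.1 * gfun μ₂ p.2 ∂μ := by
    rw [integral_prod _ iT2]
    refine integral_congr_ae (Filter.Eventually.of_forall fun p => ?_)
    show (∫ y : ℝ × ℝ, |p.1 - y.1| * gfun μ₂ p.2 ∂μ) = gfun μ₁ p.1 * gfun μ₂ p.2
    rw [integral_mul_const, ← gmap1]
  have vT3 : (∫ q : (ℝ×ℝ)×(ℝ×ℝ), |q.1.1 - q.2.1| * gfun μ₂ q.2.2 ∂(μ.prod μ)) =
      ∫ p : ℝ × ℝ, gfun μ₁ p.1 * gfun μ₂ p.2 ∂μ := by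
    rw [integral_prod_symm _ iT3]
    refine integral_congr_ae (Filter.Eventually.of_forall fun y => ?_)
    show (∫ p : ℝ × ℝ, |p.1 - y.1| * gfun μ₂ y.2 ∂μ) = gfun μ₁ y.1 * gfun μ₂ y.2
    rw [integral_mul_const]
    congr 1
    rw [gmap1]
    exact integral_congr_ae (Filter.Eventually.of_forall fun p => abs_sub_comm _ _)
  have vT4 : (∫ q : (ℝ×ℝ)×(ℝ×ℝ), |q.1.1 - q.2.1| * mfun μ₂ ∂(μ.prod μ)) =
      mfun μ₁ * mfun μ₂ := by
    rw [integral_mul_const, ← hm1]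
  have vT5 : (∫ q : (ℝ×ℝ)×(ℝ×ℝ), gfun μ₁ q.1.1 * |q.1.2 - q.2.2| ∂(μ.prod μ)) =
      ∫ p : ℝ × ℝ, gfun μ₁ p.1 * gfun μ₂ p.2 ∂μ := by
    rw [integral_prod _ iT5]
    refine integral_congr_ae (Filter.Eventually.of_forall fun p => ?_)
    show (∫ y : ℝ × ℝ, gfun μ₁ p.1 * |p.2 - y.2| ∂μ) = gfun μ₁ p.1 * gfun μ₂ p.2
    rw [integral_const_mul, ← gmap2]
  have vT6 : (∫ q : (ℝ×ℝ)×(ℝ×ℝ), gfun μ₁ q.1.1 * gfun μ₂ q.1.2 ∂(μ.prod μ)) =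
      ∫ p : ℝ × ℝ, gfun μ₁ p.1 * gfun μ₂ p.2 ∂μ :=
    vfst (fun p => gfun μ₁ p.1 * gfun μ₂ p.2)
      ((mg1.comp measurable_fst).mul (mg2.comp measurable_snd)).aestronglyMeasurable
  have vT7 : (∫ q : (ℝ×ℝ)×(ℝ×ℝ), gfun μ₁ q.1.1 * gfun μ₂ q.2.2 ∂(μ.prod μ)) =
      mfun μ₁ * mfun μ₂ := by
    have h := integral_prod_mul (μ := μ) (ν := μ)
      (fun p : ℝ × ℝ => gfun μ₁ p.1) (fun p : ℝ × ℝ => gfun μ₂ p.2)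
    rw [hm1val, hm2val]
    exact h
  have vT8 : (∫ q : (ℝ×ℝ)×(ℝ×ℝ), gfun μ₁ q.1.1 * mfun μ₂ ∂(μ.prod μ)) =
      mfun μ₁ * mfun μ₂ := by
    rw [integral_mul_const, vG1a]
  have vT9 : (∫ q : (ℝ×ℝ)×(ℝ×ℝ), gfun μ₁ q.2.1 * |q.1.2 - q.2.2| ∂(μ.prod μ)) =
      ∫ p : ℝ × ℝ, gfun μ₁ p.1 * gfun μ₂ p.2 ∂μ := by
    rw [integral_prod_symm _ iT9]
    refine integral_congr_ae (Filter.Eventually.of_forall fun y => ?_)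
    show (∫ p : ℝ × ℝ, gfun μ₁ y.1 * |p.2 - y.2| ∂μ) = gfun μ₁ y.1 * gfun μ₂ y.2
    rw [integral_const_mul]
    congr 1
    rw [gmap2]
    exact integral_congr_ae (Filter.Eventually.of_forall fun p => abs_sub_comm _ _)
  have vT10 : (∫ q : (ℝ×ℝ)×(ℝ×ℝ), gfun μ₁ q.2.1 * gfun μ₂ q.1.2 ∂(μ.prod μ)) =
      mfun μ₁ * mfun μ₂ := by
    have h := integral_prod_mul (μ := μ) (ν := μ)
      (fun p : ℝ × ℝ => gfun μ₂ p.2) (fun p : ℝ × ℝ => gfun μ₁ p.1)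
    have h2 : (∫ q : (ℝ×ℝ)×(ℝ×ℝ), gfun μ₁ q.2.1 * gfun μ₂ q.1.2 ∂(μ.prod μ)) =
        ∫ q : (ℝ×ℝ)×(ℝ×ℝ), gfun μ₂ q.1.2 * gfun μ₁ q.2.1 ∂(μ.prod μ) :=
      integral_congr_ae (Filter.Eventually.of_forall fun q => mul_comm _ _)
    rw [hm1val, hm2val, h2]
    exact h.trans (mul_comm _ _)
  have vT11 : (∫ q : (ℝ×ℝ)×(ℝ×ℝ), gfun μ₁ q.2.1 * gfun μ₂ q.2.2 ∂(μ.prod μ)) =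
      ∫ p : ℝ × ℝ, gfun μ₁ p.1 * gfun μ₂ p.2 ∂μ :=
    vsnd (fun p => gfun μ₁ p.1 * gfun μ₂ p.2)
      ((mg1.comp measurable_fst).mul (mg2.comp measurable_snd)).aestronglyMeasurable
  have vT12 : (∫ q : (ℝ×ℝ)×(ℝ×ℝ), gfun μ₁ q.2.1 * mfun μ₂ ∂(μ.prod μ)) =
      mfun μ₁ * mfun μ₂ := by
    rw [integral_mul_const, vG1b]
  have vT13 : (∫ q : (ℝ×ℝ)×(ℝ×ℝ), mfun μ₁ * |q.1.2 - q.2.2| ∂(μ.prod μ)) =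
      mfun μ₁ * mfun μ₂ := by
    rw [integral_const_mul, ← hm2]
  have vT14 : (∫ q : (ℝ×ℝ)×(ℝ×ℝ), mfun μ₁ * gfun μ₂ q.1.2 ∂(μ.prod μ)) =
      mfun μ₁ * mfun μ₂ := by
    rw [integral_const_mul, vG2a]
  have vT15 : (∫ q : (ℝ×ℝ)×(ℝ×ℝ), mfun μ₁ * gfun μ₂ q.2.2 ∂(μ.prod μ)) =
      mfun μ₁ * mfun μ₂ := by
    rw [integral_const_mul, vG2b]
  have vT16 : (∫ _ : (ℝ×ℝ)×(ℝ×ℝ), mfun μ₁ * mfun μ₂ ∂(μ.prod μ)) =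
      mfun μ₁ * mfun μ₂ := by
    simp [measure_univ]
  -- expand the kernel product
  have hker : (fun q : (ℝ×ℝ)×(ℝ×ℝ) =>
      bergsmaKernel μ₁ q.1.1 q.2.1 * bergsmaKernel μ₂ q.1.2 q.2.2) = fun q =>
      (1 / 4 : ℝ) *
        ((|q.1.1 - q.2.1| - gfun μ₁ q.1.1 - gfun μ₁ q.2.1 + mfun μ₁) *
          (|q.1.2 - q.2.2| - gfun μ₂ q.1.2 - gfun μ₂ q.2.2 + mfun μ₂)) := by
    funext q; simp only [bergsmaKernel]; ring
  rw [hker, integral_const_mul]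
  have hexp : (fun q : (ℝ×ℝ)×(ℝ×ℝ) =>
      (|q.1.1 - q.2.1| - gfun μ₁ q.1.1 - gfun μ₁ q.2.1 + mfun μ₁) *
        (|q.1.2 - q.2.2| - gfun μ₂ q.1.2 - gfun μ₂ q.2.2 + mfun μ₂)) = fun q =>
      |q.1.1 - q.2.1| * |q.1.2 - q.2.2|
        - |q.1.1 - q.2.1| * gfun μ₂ q.1.2
        - |q.1.1 - q.2.1| * gfun μ₂ q.2.2
        + |q.1.1 - q.2.1| * mfun μ₂
        - gfun μ₁ q.1.1 * |q.1.2 - q.2.2|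
        + gfun μ₁ q.1.1 * gfun μ₂ q.1.2
        + gfun μ₁ q.1.1 * gfun μ₂ q.2.2
        - gfun μ₁ q.1.1 * mfun μ₂
        - gfun μ₁ q.2.1 * |q.1.2 - q.2.2|
        + gfun μ₁ q.2.1 * gfun μ₂ q.1.2
        + gfun μ₁ q.2.1 * gfun μ₂ q.2.2
        - gfun μ₁ q.2.1 * mfun μ₂
        + mfun μ₁ * |q.1.2 - q.2.2|
        - mfun μ₁ * gfun μ₂ q.1.2
        - mfun μ₁ * gfun μ₂ q.2.2
        + mfun μ₁ * mfun μ₂ := by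
    funext q; ring
  rw [hexp]
  have j2 : Integrable (fun q : (ℝ×ℝ)×(ℝ×ℝ) => |q.1.1 - q.2.1| * |q.1.2 - q.2.2| - |q.1.1 - q.2.1| * gfun μ₂ q.1.2) (μ.prod μ) :=
    iT1.sub iT2
  have j3 : Integrable (fun q : (ℝ×ℝ)×(ℝ×ℝ) => |q.1.1 - q.2.1| * |q.1.2 - q.2.2| - |q.1.1 - q.2.1| * gfun μ₂ q.1.2 - |q.1.1 - q.2.1| * gfun μ₂ q.2.2) (μ.prod μ) :=
    j2.sub iT3
  have j4 : Integrable (fun q : (ℝ×ℝ)×(ℝ×ℝ) => |q.1.1 - q.2.1| * |q.1.2 - q.2.2| - |q.1.1 - q.2.1| * gfun μ₂ q.1.2 - |q.1.1 - q.2.1| * gfun μ₂ q.2.2 + |q.1.1 - q.2.1| * mfun μ₂) (μ.prod μ) :=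
    j3.add iT4
  have j5 : Integrable (fun q : (ℝ×ℝ)×(ℝ×ℝ) => |q.1.1 - q.2.1| * |q.1.2 - q.2.2| - |q.1.1 - q.2.1| * gfun μ₂ q.1.2 - |q.1.1 - q.2.1| * gfun μ₂ q.2.2 + |q.1.1 - q.2.1| * mfun μ₂ - gfun μ₁ q.1.1 * |q.1.2 - q.2.2|) (μ.prod μ) :=
    j4.sub iT5
  have j6 : Integrable (fun q : (ℝ×ℝ)×(ℝ×ℝ) => |q.1.1 - q.2.1| * |q.1.2 - q.2.2| - |q.1.1 - q.2.1| * gfun μ₂ q.1.2 - |q.1.1 - q.2.1| * gfun μ₂ q.2.2 + |q.1.1 - q.2.1| * mfun μ₂ - gfun μ₁ q.1.1 * |q.1.2 - q.2.2| + gfun μ₁ q.1.1 * gfun μ₂ q.1.2) (μ.prod μ) :=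
    j5.add iT6
  have j7 : Integrable (fun q : (ℝ×ℝ)×(ℝ×ℝ) => |q.1.1 - q.2.1| * |q.1.2 - q.2.2| - |q.1.1 - q.2.1| * gfun μ₂ q.1.2 - |q.1.1 - q.2.1| * gfun μ₂ q.2.2 + |q.1.1 - q.2.1| * mfun μ₂ - gfun μ₁ q.1.1 * |q.1.2 - q.2.2| + gfun μ₁ q.1.1 * gfun μ₂ q.1.2 + gfun μ₁ q.1.1 * gfun μ₂ q.2.2) (μ.prod μ) :=
    j6.add iT7
  have j8 : Integrable (fun q : (ℝ×ℝ)×(ℝ×ℝ) => |q.1.1 - q.2.1| * |q.1.2 - q.2.2| - |q.1.1 - q.2.1| * gfun μ₂ q.1.2 - |q.1.1 - q.2.1| * gfun μ₂ q.2.2 + |q.1.1 - q.2.1| * mfun μ₂ - gfun μ₁ q.1.1 * |q.1.2 - q.2.2| + gfun μ₁ q.1.1 * gfun μ₂ q.1.2 + gfun μ₁ q.1.1 * gfun μ₂ q.2.2 - gfun μ₁ q.1.1 * mfun μ₂) (μ.prod μ) :=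
    j7.sub iT8
  have j9 : Integrable (fun q : (ℝ×ℝ)×(ℝ×ℝ) => |q.1.1 - q.2.1| * |q.1.2 - q.2.2| - |q.1.1 - q.2.1| * gfun μ₂ q.1.2 - |q.1.1 - q.2.1| * gfun μ₂ q.2.2 + |q.1.1 - q.2.1| * mfun μ₂ - gfun μ₁ q.1.1 * |q.1.2 - q.2.2| + gfun μ₁ q.1.1 * gfun μ₂ q.1.2 + gfun μ₁ q.1.1 * gfun μ₂ q.2.2 - gfun μ₁ q.1.1 * mfun μ₂ - gfun μ₁ q.2.1 * |q.1.2 - q.2.2|) (μ.prod μ) :=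
    j8.sub iT9
  have j10 : Integrable (fun q : (ℝ×ℝ)×(ℝ×ℝ) => |q.1.1 - q.2.1| * |q.1.2 - q.2.2| - |q.1.1 - q.2.1| * gfun μ₂ q.1.2 - |q.1.1 - q.2.1| * gfun μ₂ q.2.2 + |q.1.1 - q.2.1| * mfun μ₂ - gfun μ₁ q.1.1 * |q.1.2 - q.2.2| + gfun μ₁ q.1.1 * gfun μ₂ q.1.2 + gfun μ₁ q.1.1 * gfun μ₂ q.2.2 - gfun μ₁ q.1.1 * mfun μ₂ - gfun μ₁ q.2.1 * |q.1.2 - q.2.2| + gfun μ₁ q.2.1 * gfun μ₂ q.1.2) (μ.prod μ) :=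
    j9.add iT10
  have j11 : Integrable (fun q : (ℝ×ℝ)×(ℝ×ℝ) => |q.1.1 - q.2.1| * |q.1.2 - q.2.2| - |q.1.1 - q.2.1| * gfun μ₂ q.1.2 - |q.1.1 - q.2.1| * gfun μ₂ q.2.2 + |q.1.1 - q.2.1| * mfun μ₂ - gfun μ₁ q.1.1 * |q.1.2 - q.2.2| + gfun μ₁ q.1.1 * gfun μ₂ q.1.2 + gfun μ₁ q.1.1 * gfun μ₂ q.2.2 - gfun μ₁ q.1.1 * mfun μ₂ - gfun μ₁ q.2.1 * |q.1.2 - q.2.2| + gfun μ₁ q.2.1 * gfun μ₂ q.1.2 + gfun μ₁ q.2.1 * gfun μ₂ q.2.2) (μ.prod μ) :=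
    j10.add iT11
  have j12 : Integrable (fun q : (ℝ×ℝ)×(ℝ×ℝ) => |q.1.1 - q.2.1| * |q.1.2 - q.2.2| - |q.1.1 - q.2.1| * gfun μ₂ q.1.2 - |q.1.1 - q.2.1| * gfun μ₂ q.2.2 + |q.1.1 - q.2.1| * mfun μ₂ - gfun μ₁ q.1.1 * |q.1.2 - q.2.2| + gfun μ₁ q.1.1 * gfun μ₂ q.1.2 + gfun μ₁ q.1.1 * gfun μ₂ q.2.2 - gfun μ₁ q.1.1 * mfun μ₂ - gfun μ₁ q.2.1 * |q.1.2 - q.2.2| + gfun μ₁ q.2.1 * gfun μ₂ q.1.2 + gfun μ₁ q.2.1 * gfun μ₂ q.2.2 - gfun μ₁ q.2.1 * mfun μ₂) (μ.prod μ) :=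
    j11.sub iT12
  have j13 : Integrable (fun q : (ℝ×ℝ)×(ℝ×ℝ) => |q.1.1 - q.2.1| * |q.1.2 - q.2.2| - |q.1.1 - q.2.1| * gfun μ₂ q.1.2 - |q.1.1 - q.2.1| * gfun μ₂ q.2.2 + |q.1.1 - q.2.1| * mfun μ₂ - gfun μ₁ q.1.1 * |q.1.2 - q.2.2| + gfun μ₁ q.1.1 * gfun μ₂ q.1.2 + gfun μ₁ q.1.1 * gfun μ₂ q.2.2 - gfun μ₁ q.1.1 * mfun μ₂ - gfun μ₁ q.2.1 * |q.1.2 - q.2.2| + gfun μ₁ q.2.1 * gfun μ₂ q.1.2 + gfun μ₁ q.2.1 * gfun μ₂ q.2.2 - gfun μ₁ q.2.1 * mfun μ₂ + mfun μ₁ * |q.1.2 - q.2.2|) (μ.prod μ) :=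
    j12.add iT13
  have j14 : Integrable (fun q : (ℝ×ℝ)×(ℝ×ℝ) => |q.1.1 - q.2.1| * |q.1.2 - q.2.2| - |q.1.1 - q.2.1| * gfun μ₂ q.1.2 - |q.1.1 - q.2.1| * gfun μ₂ q.2.2 + |q.1.1 - q.2.1| * mfun μ₂ - gfun μ₁ q.1.1 * |q.1.2 - q.2.2| + gfun μ₁ q.1.1 * gfun μ₂ q.1.2 + gfun μ₁ q.1.1 * gfun μ₂ q.2.2 - gfun μ₁ q.1.1 * mfun μ₂ - gfun μ₁ q.2.1 * |q.1.2 - q.2.2| + gfun μ₁ q.2.1 * gfun μ₂ q.1.2 + gfun μ₁ q.2.1 * gfun μ₂ q.2.2 - gfun μ₁ q.2.1 * mfun μ₂ + mfun μ₁ * |q.1.2 - q.2.2| - mfun μ₁ * gfun μ₂ q.1.2) (μ.prod μ) :=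
    j13.sub iT14
  have j15 : Integrable (fun q : (ℝ×ℝ)×(ℝ×ℝ) => |q.1.1 - q.2.1| * |q.1.2 - q.2.2| - |q.1.1 - q.2.1| * gfun μ₂ q.1.2 - |q.1.1 - q.2.1| * gfun μ₂ q.2.2 + |q.1.1 - q.2.1| * mfun μ₂ - gfun μ₁ q.1.1 * |q.1.2 - q.2.2| + gfun μ₁ q.1.1 * gfun μ₂ q.1.2 + gfun μ₁ q.1.1 * gfun μ₂ q.2.2 - gfun μ₁ q.1.1 * mfun μ₂ - gfun μ₁ q.2.1 * |q.1.2 - q.2.2| + gfun μ₁ q.2.1 * gfun μ₂ q.1.2 + gfun μ₁ q.2.1 * gfun μ₂ q.2.2 - gfun μ₁ q.2.1 * mfun μ₂ + mfun μ₁ * |q.1.2 - q.2.2| - mfun μ₁ * gfun μ₂ q.1.2 - mfun μ₁ * gfun μ₂ q.2.2) (μ.prod μ) :=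
    j14.sub iT15
  rw [integral_add j15 iT16, integral_sub j14 iT15, integral_sub j13 iT14,
    integral_add j12 iT13, integral_sub j11 iT12, integral_add j10 iT11,
    integral_add j9 iT10, integral_sub j8 iT9, integral_sub j7 iT8,
    integral_add j6 iT7, integral_add j5 iT6, integral_sub j4 iT5,
    integral_add j3 iT4, integral_sub j2 iT3, integral_sub iT1 iT2]
  rw [vT2, vT3, vT4, vT5, vT6, vT7, vT8, vT9, vT10, vT11, vT12, vT13, vT14, vT15, vT16]
  ring
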